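/- Let t0 < t1, A ∈ ℝ^{n×n}, B ∈ ℝ^{n×p}, and x0, x1 ∈ ℝ^n. Assume rank [B, AB, …, A^{n−1}B] = n, so that the controllability Gramian 𝔾 = ∫_{t0}^{t1} e^{(t1−s)A} B Bᵀ e^{(t1−s)Aᵀ} ds is invertible. Set ũ(t) = Bᵀ e^{(t1−t)Aᵀ} z with z = 𝔾^{−1}(x1 − e^{(t1−t0)A} x0). Then ũ steers the system from x0 at time t0 to x1 at time t1, and for every u ∈ L²((t0,t1); ℝ^p) which also steers the system from x0 at time t0 to x1 at time t1 one has ∫_{t0}^{t1} ‖ũ(t)‖² dt ≤ ∫_{t0}^{t1} ‖u(t)‖² dt, with equality if and only if u = ũ a.e. on [t0,t1]. -/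

import Mathlib

open MeasureTheory Matrix NormedSpace

/-- The Kalman matrix `M = [B, AB, …, A^{n−1}B]`. -/
noncomputable def kalmanMatrix {n p : ℕ} (A : Matrix (Fin n) (Fin n) ℝ)
    (B : Matrix (Fin n) (Fin p) ℝ) : Matrix (Fin n) (Fin n × Fin p) ℝ :=
  Matrix.of fun i jk => (A ^ (jk.1 : ℕ) * B) i jk.2

/-- The controllability Gramian `𝔾 = ∫_{t0}^{t1} e^{(t1−s)A} B Bᵀ e^{(t1−s)Aᵀ} ds`. -/
noncomputable def gramian {n p : ℕ} (A : Matrix (Fin n) (Fin n) ℝ)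
    (B : Matrix (Fin n) (Fin p) ℝ) (t0 t1 : ℝ) : Matrix (Fin n) (Fin n) ℝ :=
  Matrix.of fun i j =>
    ∫ s in t0..t1, (exp ((t1 - s) • A) * B * Bᵀ * exp ((t1 - s) • Aᵀ)) i j

attribute [local instance] Matrix.linftyOpNormedRing Matrix.linftyOpNormedAlgebra

namespace Statement3Aux

open Set

/-- Continuity of `s ↦ e^{(t1-s)M}`. -/
lemma cont_expM {N : ℕ} (t1 : ℝ) (M : Matrix (Fin N) (Fin N) ℝ) :
    Continuous fun s : ℝ => exp ((t1 - s) • M) :=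
  exp_continuous.comp ((continuous_const.sub continuous_id).smul continuous_const)

/-- Derivative of `s ↦ e^{(t1-s)M}`. -/
lemma hasDerivAt_expM {N : ℕ} (t1 : ℝ) (M : Matrix (Fin N) (Fin N) ℝ) (s : ℝ) :
    HasDerivAt (fun s : ℝ => exp ((t1 - s) • M)) (-(M * exp ((t1 - s) • M))) s := by
  have h1 := hasDerivAt_exp_smul_const' (𝕂 := ℝ) M (t1 - s)
  have h2 : HasDerivAt (fun x : ℝ => t1 - x) (-1) s := (hasDerivAt_id s).const_sub t1
  exact (h1.scomp s h2).congr_deriv (by simp; rfl)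

lemma expM_transpose {N : ℕ} (t1 s : ℝ) (M : Matrix (Fin N) (Fin N) ℝ) :
    exp ((t1 - s) • Mᵀ) = (exp ((t1 - s) • M))ᵀ := by
  rw [← Matrix.transpose_smul, Matrix.exp_transpose]

/-- A continuous real function is in L² of a restricted volume on `Ioc t0 t1`. -/
lemma cont_memL2 {f : ℝ → ℝ} (hf : Continuous f) (t0 t1 : ℝ) :
    MemLp f 2 (volume.restrict (Ioc t0 t1)) := by
  haveI : IsFiniteMeasure (volume.restrict (Ioc t0 t1)) :=
    ⟨by rw [Measure.restrict_apply_univ]; exact measure_Ioc_lt_top⟩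
  obtain ⟨C, hC⟩ := (isCompact_Icc (a := t0) (b := t1)).exists_bound_of_continuousOn
    hf.continuousOn
  exact MemLp.of_bound (hf.aestronglyMeasurable.restrict) C
    ((ae_restrict_mem measurableSet_Ioc).mono fun s hs => hC s (Ioc_subset_Icc_self hs))

/-- Product of two L² functions is integrable. -/
lemma memL2_mul_integrable {α} [MeasurableSpace α] {μ : Measure α} {f g : α → ℝ}
    (hf : MemLp f 2 μ) (hg : MemLp g 2 μ) : Integrable (fun x => f x * g x) μ := by
  have h := (((hf.add hg).integrable_sq.sub hf.integrable_sq).sub hg.integrable_sq).mul_const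
    (1 / 2 : ℝ)
  have he : (fun x => f x * g x) = fun x => ((f x + g x) ^ 2 - f x ^ 2 - g x ^ 2) * (1 / 2) := by
    funext x; ring
  rw [he]; exact h

/-- Componentwise integrability gives integrability of a Pi-valued function. -/
lemma integrable_pi' {ι : Type*} [Fintype ι] [DecidableEq ι] {α} [MeasurableSpace α]
    {μ : Measure α} {f : α → ι → ℝ} (h : ∀ i, Integrable (fun x => f x i) μ) :
    Integrable f μ := by
  have he : f = fun x => ∑ i, Pi.single i (f x i) := by
    funext x; rw [Finset.univ_sum_single]
  rw [he]
  refine integrable_finset_sum _ fun i _ => ?_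
  have := ((LinearMap.single ℝ (fun _ : ι => ℝ) i).toContinuousLinearMap).integrable_comp (h i)
  simpa using this

/-- Evaluating a vector-valued integral at a coordinate. -/
lemma integral_pi_apply {ι : Type*} [Fintype ι] {α} [MeasurableSpace α] {μ : Measure α}
    {f : α → ι → ℝ} (hf : Integrable f μ) (i : ι) :
    (∫ x, f x ∂μ) i = ∫ x, f x i ∂μ :=
  ((ContinuousLinearMap.proj (R := ℝ) (φ := fun _ : ι => ℝ) i).integral_comp_comm hf).symm

/-- dot product shuffling identity. -/
lemma dot_shift {n p : ℕ} (B : Matrix (Fin n) (Fin p) ℝ) (M : Matrix (Fin n) (Fin n) ℝ)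
    (z : Fin n → ℝ) (w : Fin p → ℝ) :
    (Bᵀ.mulVec (Mᵀ.mulVec z)) ⬝ᵥ w = z ⬝ᵥ (M.mulVec (B.mulVec w)) := by
  rw [Matrix.mulVec_mulVec, ← Matrix.transpose_mul, Matrix.mulVec_transpose,
    ← Matrix.dotProduct_mulVec, Matrix.mulVec_mulVec]

end Statement3Aux

open Statement3Aux Set

section Main

variable {n p : ℕ}

/-- The Gramian applied to a vector, as an integral. -/
lemma gramian_mulVec {t0 t1 : ℝ} (hle : t0 ≤ t1) (A : Matrix (Fin n) (Fin n) ℝ)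
    (B : Matrix (Fin n) (Fin p) ℝ) (z : Fin n → ℝ) (i : Fin n) :
    ((gramian A B t0 t1).mulVec z) i
      = ∫ s in Ioc t0 t1,
          ((exp ((t1 - s) • A) * B * Bᵀ * exp ((t1 - s) • Aᵀ)).mulVec z) i := by
  have hKcont : Continuous fun s : ℝ =>
      exp ((t1 - s) • A) * B * Bᵀ * exp ((t1 - s) • Aᵀ) :=
    (((cont_expM t1 A).matrix_mul continuous_const).matrix_mul continuous_const).matrix_mul
      (cont_expM t1 Aᵀ)
  have hent : ∀ i j, IntegrableOn
      (fun s => (exp ((t1 - s) • A) * B * Bᵀ * exp ((t1 - s) • Aᵀ)) i j)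
      (Ioc t0 t1) volume := fun i j =>
    (intervalIntegrable_iff_integrableOn_Ioc_of_le hle).1
      ((hKcont.matrix_elem i j).intervalIntegrable t0 t1)
  unfold gramian
  simp only [Matrix.mulVec, dotProduct, Matrix.of_apply]
  simp only [intervalIntegral.integral_of_le hle]
  simp_rw [← MeasureTheory.integral_mul_const]
  rw [← MeasureTheory.integral_finset_sum]
  exact fun j _ => (hent i j).mul_const _

/-- Pointwise quadratic form identity. -/
lemma quad_eq (t1 : ℝ) (A : Matrix (Fin n) (Fin n) ℝ) (B : Matrix (Fin n) (Fin p) ℝ)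
    (v : Fin n → ℝ) (s : ℝ) :
    v ⬝ᵥ ((exp ((t1 - s) • A) * B * Bᵀ * exp ((t1 - s) • Aᵀ)).mulVec v)
      = ∑ i, (Bᵀ.mulVec ((exp ((t1 - s) • Aᵀ)).mulVec v)) i ^ 2 := by
  have h1 : exp ((t1 - s) • A) * B * Bᵀ * exp ((t1 - s) • Aᵀ)
      = (exp ((t1 - s) • A) * B) * (exp ((t1 - s) • A) * B)ᵀ := by
    rw [Matrix.transpose_mul, expM_transpose, Matrix.mul_assoc, Matrix.mul_assoc]
  have h2 : Bᵀ.mulVec ((exp ((t1 - s) • Aᵀ)).mulVec v)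
      = (exp ((t1 - s) • A) * B)ᵀ.mulVec v := by
    rw [Matrix.mulVec_mulVec, Matrix.transpose_mul, expM_transpose]
  rw [h1, h2, ← Matrix.mulVec_mulVec, Matrix.dotProduct_mulVec,
    ← Matrix.mulVec_transpose]
  simp [dotProduct, sq]

theorem gramian_isUnit {t0 t1 : ℝ} (ht : t0 < t1) (A : Matrix (Fin n) (Fin n) ℝ)
    (B : Matrix (Fin n) (Fin p) ℝ) (hrank : (kalmanMatrix A B).rank = n) :
    IsUnit (gramian A B t0 t1).det := by
  rw [isUnit_iff_ne_zero]
  intro hdet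
  obtain ⟨v, hv0, hv⟩ := Matrix.exists_mulVec_eq_zero_iff.2 hdet
  -- The function g and its sum of squares q
  set g : ℝ → Fin p → ℝ := fun s => Bᵀ.mulVec ((exp ((t1 - s) • Aᵀ)).mulVec v) with hg
  set q : ℝ → ℝ := fun s => ∑ i, (g s i) ^ 2 with hq
  have hgcont : Continuous g :=
    continuous_const.matrix_mulVec ((cont_expM t1 Aᵀ).matrix_mulVec continuous_const)
  have hqcont : Continuous q :=
    continuous_finset_sum _ fun i _ => ((continuous_apply i).comp hgcont).pow 2
  have hqnonneg : ∀ s, 0 ≤ q s := fun s => Finset.sum_nonneg fun i _ => sq_nonneg _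
  have hKv : Continuous fun s : ℝ =>
      (exp ((t1 - s) • A) * B * Bᵀ * exp ((t1 - s) • Aᵀ)).mulVec v :=
    ((((cont_expM t1 A).matrix_mul continuous_const).matrix_mul continuous_const).matrix_mul
      (cont_expM t1 Aᵀ)).matrix_mulVec continuous_const
  -- ∫ q = 0
  have hint0 : ∫ s in Ioc t0 t1, q s = 0 := by
    have h1 : v ⬝ᵥ ((gramian A B t0 t1).mulVec v) = ∫ s in Ioc t0 t1, q s := by
      unfold dotProduct
      have h2 : ∀ i, v i * ((gramian A B t0 t1).mulVec v) i
          = ∫ s in Ioc t0 t1,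
              v i * ((exp ((t1 - s) • A) * B * Bᵀ * exp ((t1 - s) • Aᵀ)).mulVec v) i := by
        intro i
        rw [gramian_mulVec ht.le, ← MeasureTheory.integral_const_mul]
      simp_rw [h2]
      have hsum := (MeasureTheory.integral_finset_sum (μ := volume.restrict (Ioc t0 t1))
        Finset.univ
        (f := fun (i : Fin n) (s : ℝ) =>
          v i * ((exp ((t1 - s) • A) * B * Bᵀ * exp ((t1 - s) • Aᵀ)).mulVec v) i)
        (fun i _ => (Continuous.integrableOn_Ioc
          ((continuous_const.mul ((continuous_apply i).comp hKv)))))).symm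
      rw [hsum]
      refine MeasureTheory.integral_congr_ae (Filter.Eventually.of_forall fun s => ?_)
      simp only [hq, hg]
      rw [← quad_eq t1 A B v s]
      simp [dotProduct]
    rw [← h1, hv, dotProduct_zero]
  -- q vanishes on Ioc, hence g vanishes on Ioo
  have hq_ae : q =ᵐ[volume.restrict (Ioc t0 t1)] 0 := by
    have hqint : IntegrableOn q (Ioc t0 t1) volume := hqcont.integrableOn_Ioc
    exact (MeasureTheory.integral_eq_zero_iff_of_nonneg hqnonneg hqint).1 hint0
  have hqzero : EqOn q 0 (Ioc t0 t1) :=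
    volume.eqOn_Ioc_of_ae_eq hq_ae hqcont.continuousOn continuousOn_const
  have hgzero : ∀ s ∈ Ioo t0 t1, g s = 0 := by
    intro s hs
    have hq0 : q s = 0 := hqzero (Ioo_subset_Ioc_self hs)
    funext i
    have := (Finset.sum_eq_zero_iff_of_nonneg (fun i _ => sq_nonneg (g s i))).1 hq0 i
      (Finset.mem_univ i)
    exact sq_eq_zero_iff.1 this
  -- all derivatives vanish
  have hind : ∀ (k : ℕ), ∀ s ∈ Ioo t0 t1,
      (Bᵀ * Aᵀ ^ k).mulVec ((exp ((t1 - s) • Aᵀ)).mulVec v) = 0 := by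
    intro k
    induction k with
    | zero =>
      intro s hs
      have hthis := hgzero s hs
      simp only [hg] at hthis
      rw [pow_zero, Matrix.mul_one]
      exact hthis
    | succ k ih =>
      intro s hs
      set L : Matrix (Fin n) (Fin n) ℝ →ₗ[ℝ] (Fin p → ℝ) :=
        { toFun := fun M => (Bᵀ * Aᵀ ^ k).mulVec (M.mulVec v)
          map_add' := fun M N => by simp [Matrix.add_mulVec, Matrix.mulVec_add]
          map_smul' := fun c M => by
            simp [Matrix.smul_mulVec, Matrix.mulVec_smul] } with hL
      have hd1 : HasDerivAt (fun s : ℝ => L.toContinuousLinearMap (exp ((t1 - s) • Aᵀ)))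
          (L.toContinuousLinearMap (-(Aᵀ * exp ((t1 - s) • Aᵀ)))) s :=
        L.toContinuousLinearMap.hasFDerivAt.comp_hasDerivAt s (hasDerivAt_expM t1 Aᵀ s)
      have hd0 : HasDerivAt (fun s : ℝ => L.toContinuousLinearMap (exp ((t1 - s) • Aᵀ)))
          0 s := by
        refine (hasDerivAt_const s (0 : Fin p → ℝ)).congr_of_eventuallyEq ?_
        filter_upwards [isOpen_Ioo.mem_nhds hs] with x hx
        simpa [hL] using ih x hx
      have huniq := hd1.unique hd0
      have h3 : (Bᵀ * Aᵀ ^ k).mulVec ((Aᵀ * exp ((t1 - s) • Aᵀ)).mulVec v) = 0 := by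
        have : L.toContinuousLinearMap (Aᵀ * exp ((t1 - s) • Aᵀ)) = 0 := by
          rw [← neg_eq_zero, ← map_neg]
          exact huniq
        simpa [hL] using this
      have h4 : Bᵀ * Aᵀ ^ k * (Aᵀ * exp ((t1 - s) • Aᵀ))
          = Bᵀ * Aᵀ ^ (k + 1) * exp ((t1 - s) • Aᵀ) := by
        rw [pow_succ, Matrix.mul_assoc, Matrix.mul_assoc, Matrix.mul_assoc]
      have h3' : ((Bᵀ * Aᵀ ^ k) * (Aᵀ * exp ((t1 - s) • Aᵀ))).mulVec v = 0 := by
        rw [← Matrix.mulVec_mulVec]; exact h3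
      rw [h4] at h3'
      rw [← Matrix.mulVec_mulVec] at h3'
      exact h3' 
  -- specialize to the midpoint
  set s0 : ℝ := (t0 + t1) / 2 with hs0def
  have hs0 : s0 ∈ Ioo t0 t1 := ⟨by simp only [hs0def]; linarith, by simp only [hs0def]; linarith⟩
  set w : Fin n → ℝ := (exp ((t1 - s0) • Aᵀ)).mulVec v with hwdef
  have hBw : ∀ k : ℕ, (Bᵀ * Aᵀ ^ k).mulVec w = 0 := fun k => hind k s0 hs0
  -- kalman transpose kills w
  have hker : (kalmanMatrix A B)ᵀ.mulVec w = 0 := by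
    funext jk
    obtain ⟨k, j⟩ := jk
    have h5 : Bᵀ * Aᵀ ^ (k : ℕ) = (A ^ (k : ℕ) * B)ᵀ := by
      rw [Matrix.transpose_mul, Matrix.transpose_pow]
    have := congrFun (hBw k) j
    rw [h5] at this
    simpa [Matrix.mulVec, dotProduct, kalmanMatrix, Matrix.transpose_apply] using this
  -- surjectivity from rank
  have hsurj : ∃ x, (kalmanMatrix A B).mulVec x = w := by
    have htop : LinearMap.range (kalmanMatrix A B).mulVecLin = ⊤ := by
      apply Submodule.eq_top_of_finrank_eq
      rw [Module.finrank_fintype_fun_eq_card, Fintype.card_fin]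
      exact hrank
    obtain ⟨x, hx⟩ := LinearMap.range_eq_top.1 htop w
    exact ⟨x, by rw [← Matrix.mulVecLin_apply]; exact hx⟩
  have hw0 : w = 0 := by
    obtain ⟨x, hx⟩ := hsurj
    have h0 : w ⬝ᵥ w = 0 := by
      nth_rewrite 2 [← hx]
      rw [Matrix.dotProduct_mulVec, ← Matrix.mulVec_transpose, hker, zero_dotProduct]
    funext i
    have := (Finset.sum_eq_zero_iff_of_nonneg (fun i _ => mul_self_nonneg (w i))).1 h0 i
      (Finset.mem_univ i)
    exact mul_self_eq_zero.1 this
  -- conclude v = 0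
  have hvunit : IsUnit (exp ((t1 - s0) • Aᵀ)) := Matrix.isUnit_exp _
  have hinv : (exp ((t1 - s0) • Aᵀ))⁻¹ * exp ((t1 - s0) • Aᵀ) = 1 :=
    Matrix.nonsing_inv_mul _ ((Matrix.isUnit_iff_isUnit_det _).1 hvunit)
  apply hv0
  calc v = ((exp ((t1 - s0) • Aᵀ))⁻¹ * exp ((t1 - s0) • Aᵀ)).mulVec v := by
        rw [hinv, Matrix.one_mulVec]
    _ = (exp ((t1 - s0) • Aᵀ))⁻¹.mulVec ((exp ((t1 - s0) • Aᵀ)).mulVec v) :=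
        (Matrix.mulVec_mulVec _ _ _).symm
    _ = 0 := by rw [← hwdef, hw0, Matrix.mulVec_zero]

end Main

theorem statement_3 (n p : ℕ) (t0 t1 : ℝ) (ht : t0 < t1)
    (A : Matrix (Fin n) (Fin n) ℝ) (B : Matrix (Fin n) (Fin p) ℝ) (x0 x1 : Fin n → ℝ)
    (hrank : (kalmanMatrix A B).rank = n) :
    IsUnit (gramian A B t0 t1).det ∧
    ∀ utilde : ℝ → Fin p → ℝ,
      utilde = (fun t => Bᵀ.mulVec ((exp ((t1 - t) • Aᵀ)).mulVec
          ((gramian A B t0 t1)⁻¹.mulVec (x1 - (exp ((t1 - t0) • A)).mulVec x0)))) →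
      ((exp ((t1 - t0) • A)).mulVec x0
          + (∫ s in t0..t1, (exp ((t1 - s) • A)).mulVec (B.mulVec (utilde s)))) = x1 ∧
      ∀ u : ℝ → Fin p → ℝ, MemLp u 2 (volume.restrict (Set.Ioc t0 t1)) →
        ((exp ((t1 - t0) • A)).mulVec x0
            + (∫ s in t0..t1, (exp ((t1 - s) • A)).mulVec (B.mulVec (u s)))) = x1 →
        (∫ t in t0..t1, ∑ i, (utilde t i) ^ 2) ≤ (∫ t in t0..t1, ∑ i, (u t i) ^ 2) ∧
        ((∫ t in t0..t1, ∑ i, (utilde t i) ^ 2) = (∫ t in t0..t1, ∑ i, (u t i) ^ 2) ↔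
          ∀ᵐ t ∂(volume.restrict (Set.Icc t0 t1)), u t = utilde t) := by
  have hle := ht.le
  have hdet := gramian_isUnit ht A B hrank
  refine ⟨hdet, ?_⟩
  intro utilde hut
  set d : Fin n → ℝ := x1 - (exp ((t1 - t0) • A)).mulVec x0 with hd
  set z : Fin n → ℝ := (gramian A B t0 t1)⁻¹.mulVec d with hz
  have hutcont : Continuous utilde := by
    rw [hut]
    exact continuous_const.matrix_mulVec ((cont_expM t1 Aᵀ).matrix_mulVec continuous_const)
  have hFcont : Continuous fun s => (exp ((t1 - s) • A)).mulVec (B.mulVec (utilde s)) :=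
    (cont_expM t1 A).matrix_mulVec (continuous_const.matrix_mulVec hutcont)
  have hFtint : Integrable (fun s => (exp ((t1 - s) • A)).mulVec (B.mulVec (utilde s)))
      (volume.restrict (Ioc t0 t1)) := hFcont.integrableOn_Ioc
  have hpt : ∀ s : ℝ, (exp ((t1 - s) • A)).mulVec (B.mulVec (utilde s))
      = (exp ((t1 - s) • A) * B * Bᵀ * exp ((t1 - s) • Aᵀ)).mulVec z := by
    intro s
    rw [hut]
    simp [Matrix.mulVec_mulVec, Matrix.mul_assoc]
  have hsteerm : (∫ s in Ioc t0 t1, (exp ((t1 - s) • A)).mulVec (B.mulVec (utilde s))) = d := by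
    funext i
    rw [integral_pi_apply hFtint i]
    calc ∫ s in Ioc t0 t1, ((exp ((t1 - s) • A)).mulVec (B.mulVec (utilde s))) i
        = ∫ s in Ioc t0 t1,
            ((exp ((t1 - s) • A) * B * Bᵀ * exp ((t1 - s) • Aᵀ)).mulVec z) i :=
          MeasureTheory.integral_congr_ae
            (Filter.Eventually.of_forall fun s => congrArg (fun v => v i) (hpt s))
      _ = ((gramian A B t0 t1).mulVec z) i := (gramian_mulVec hle A B z i).symm
      _ = d i := by
          rw [hz, Matrix.mulVec_mulVec, Matrix.mul_nonsing_inv _ hdet, Matrix.one_mulVec]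
  have hsteer : (∫ s in t0..t1, (exp ((t1 - s) • A)).mulVec (B.mulVec (utilde s))) = d := by
    rw [intervalIntegral.integral_of_le hle]; exact hsteerm
  refine ⟨by rw [hsteer, hd]; abel, ?_⟩
  intro u hu hu_steer
  -- componentwise L² facts
  have hucomp : ∀ j, MemLp (fun s => u s j) 2 (volume.restrict (Ioc t0 t1)) := by
    intro j
    have := (ContinuousLinearMap.proj (R := ℝ) (φ := fun _ : Fin p => ℝ) j).comp_memLp' hu
    exact this
  have hutcomp : ∀ j, MemLp (fun s => utilde s j) 2 (volume.restrict (Ioc t0 t1)) :=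
    fun j => cont_memL2 ((continuous_apply j).comp hutcont) t0 t1
  -- integrability of components of the controlled trajectory integrand
  have hFucompi : ∀ i : Fin n, Integrable
      (fun s => ((exp ((t1 - s) • A)).mulVec (B.mulVec (u s))) i)
      (volume.restrict (Ioc t0 t1)) := by
    intro i
    have heq : (fun s => ((exp ((t1 - s) • A)).mulVec (B.mulVec (u s))) i)
        = fun s => ∑ j, (exp ((t1 - s) • A) * B) i j * u s j := by
      funext s
      rw [Matrix.mulVec_mulVec]
      rfl
    rw [heq]
    refine MeasureTheory.integrable_finset_sum _ fun j _ => ?_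
    exact memL2_mul_integrable
      (cont_memL2 (((cont_expM t1 A).matrix_mul continuous_const).matrix_elem i j) t0 t1)
      (hucomp j)
  have hFuint : Integrable (fun s => (exp ((t1 - s) • A)).mulVec (B.mulVec (u s)))
      (volume.restrict (Ioc t0 t1)) := integrable_pi' hFucompi
  have hintu : (∫ s in Ioc t0 t1, (exp ((t1 - s) • A)).mulVec (B.mulVec (u s))) = d := by
    rw [← intervalIntegral.integral_of_le hle]
    rw [hd]
    exact eq_sub_of_add_eq' hu_steer
  -- orthogonality
  have hFtcompi : ∀ i : Fin n, Integrable
      (fun s => ((exp ((t1 - s) • A)).mulVec (B.mulVec (utilde s))) i)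
      (volume.restrict (Ioc t0 t1)) :=
    fun i => ((continuous_apply i).comp hFcont).integrableOn_Ioc
  have hdz : ∀ i : Fin n, (∫ s in Ioc t0 t1,
      (((exp ((t1 - s) • A)).mulVec (B.mulVec (u s))) i
        - ((exp ((t1 - s) • A)).mulVec (B.mulVec (utilde s))) i)) = 0 := by
    intro i
    rw [MeasureTheory.integral_sub (hFucompi i) (hFtcompi i)]
    rw [← integral_pi_apply hFuint i, ← integral_pi_apply hFtint i, hintu, hsteerm, sub_self]
  have hpt2 : ∀ s : ℝ, (∑ j, utilde s j * (u s j - utilde s j))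
      = ∑ i, z i * (((exp ((t1 - s) • A)).mulVec (B.mulVec (u s))) i
          - ((exp ((t1 - s) • A)).mulVec (B.mulVec (utilde s))) i) := by
    intro s
    have hus : utilde s = Bᵀ.mulVec ((exp ((t1 - s) • A))ᵀ.mulVec z) := by
      rw [hut, ← expM_transpose]
    calc (∑ j, utilde s j * (u s j - utilde s j))
        = (Bᵀ.mulVec ((exp ((t1 - s) • A))ᵀ.mulVec z)) ⬝ᵥ (fun j => u s j - utilde s j) := by
          rw [← hus]; rfl
      _ = z ⬝ᵥ ((exp ((t1 - s) • A)).mulVec (B.mulVec (fun j => u s j - utilde s j))) :=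
          dot_shift B (exp ((t1 - s) • A)) z (fun j => u s j - utilde s j)
      _ = ∑ i, z i * (((exp ((t1 - s) • A)).mulVec (B.mulVec (u s))) i
            - ((exp ((t1 - s) • A)).mulVec (B.mulVec (utilde s))) i) := by
          rw [show (fun j => u s j - utilde s j) = u s - utilde s from rfl,
            Matrix.mulVec_sub, Matrix.mulVec_sub]
          rfl
  have horth : (∫ s in Ioc t0 t1, ∑ j, utilde s j * (u s j - utilde s j)) = 0 := by
    calc (∫ s in Ioc t0 t1, ∑ j, utilde s j * (u s j - utilde s j))
        = ∫ s in Ioc t0 t1, ∑ i, z i * (((exp ((t1 - s) • A)).mulVec (B.mulVec (u s))) i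
            - ((exp ((t1 - s) • A)).mulVec (B.mulVec (utilde s))) i) :=
          MeasureTheory.integral_congr_ae (Filter.Eventually.of_forall fun s => hpt2 s)
      _ = ∑ i, ∫ s in Ioc t0 t1, z i * (((exp ((t1 - s) • A)).mulVec (B.mulVec (u s))) i
            - ((exp ((t1 - s) • A)).mulVec (B.mulVec (utilde s))) i) :=
          MeasureTheory.integral_finset_sum _ fun i _ =>
            (((hFucompi i).sub (hFtcompi i)).const_mul (z i))
      _ = ∑ i : Fin n, (0 : ℝ) := by
          refine Finset.sum_congr rfl fun i _ => ?_
          rw [MeasureTheory.integral_const_mul, hdz i, mul_zero]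
      _ = 0 := by simp
  -- scalar integrability
  have hIu : Integrable (fun t => ∑ i, (u t i) ^ 2) (volume.restrict (Ioc t0 t1)) :=
    MeasureTheory.integrable_finset_sum _ fun i _ => (hucomp i).integrable_sq
  have hIt : Integrable (fun t => ∑ i, (utilde t i) ^ 2) (volume.restrict (Ioc t0 t1)) :=
    MeasureTheory.integrable_finset_sum _ fun i _ => (hutcomp i).integrable_sq
  have hIc : Integrable (fun t => ∑ i, utilde t i * (u t i - utilde t i))
      (volume.restrict (Ioc t0 t1)) :=
    MeasureTheory.integrable_finset_sum _ fun i _ =>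
      memL2_mul_integrable (hutcomp i) ((hucomp i).sub (hutcomp i))
  have hId : Integrable (fun t => ∑ i, (u t i - utilde t i) ^ 2)
      (volume.restrict (Ioc t0 t1)) :=
    MeasureTheory.integrable_finset_sum _ fun i _ => ((hucomp i).sub (hutcomp i)).integrable_sq
  -- key decomposition
  have hdiff : (∫ t in Ioc t0 t1, ∑ i, (u t i) ^ 2) - (∫ t in Ioc t0 t1, ∑ i, (utilde t i) ^ 2)
      = ∫ t in Ioc t0 t1, ∑ i, (u t i - utilde t i) ^ 2 := by
    have e1 : (∫ t in Ioc t0 t1, ∑ i, (u t i - utilde t i) ^ 2)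
        = ∫ t in Ioc t0 t1, ((∑ i, (u t i) ^ 2) - (∑ i, (utilde t i) ^ 2)
            - 2 * ∑ i, utilde t i * (u t i - utilde t i)) := by
      refine MeasureTheory.integral_congr_ae (Filter.Eventually.of_forall fun t => ?_)
      show (∑ i, (u t i - utilde t i) ^ 2)
          = (∑ i, (u t i) ^ 2) - (∑ i, (utilde t i) ^ 2)
            - 2 * ∑ i, utilde t i * (u t i - utilde t i)
      rw [Finset.mul_sum, ← Finset.sum_sub_distrib, ← Finset.sum_sub_distrib]
      exact Finset.sum_congr rfl fun i _ => by ring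
    have hIu_sub : Integrable (fun t => (∑ i, (u t i) ^ 2) - (∑ i, (utilde t i) ^ 2))
        (volume.restrict (Ioc t0 t1)) := hIu.sub hIt
    have hIc2 : Integrable (fun t => 2 * ∑ i, utilde t i * (u t i - utilde t i))
        (volume.restrict (Ioc t0 t1)) := hIc.const_mul 2
    rw [e1, MeasureTheory.integral_sub hIu_sub hIc2,
      MeasureTheory.integral_sub hIu hIt, MeasureTheory.integral_const_mul, horth]
    ring
  have hnonneg : 0 ≤ ∫ t in Ioc t0 t1, ∑ i, (u t i - utilde t i) ^ 2 :=
    MeasureTheory.integral_nonneg fun t => Finset.sum_nonneg fun i _ => sq_nonneg _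
  rw [intervalIntegral.integral_of_le hle, intervalIntegral.integral_of_le hle]
  constructor
  · linarith
  constructor
  · intro heq
    have h0 : (∫ t in Ioc t0 t1, ∑ i, (u t i - utilde t i) ^ 2) = 0 := by
      rw [← hdiff, heq, sub_self]
    have hae := (MeasureTheory.integral_eq_zero_iff_of_nonneg
      (fun t => Finset.sum_nonneg fun i _ => sq_nonneg _) hId).1 h0
    rw [← Measure.restrict_congr_set MeasureTheory.Ioc_ae_eq_Icc]
    filter_upwards [hae] with t htt
    funext j
    have h1 := (Finset.sum_eq_zero_iff_of_nonneg (fun i _ => sq_nonneg (u t i - utilde t i))).1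
      htt j (Finset.mem_univ j)
    have h2 := sq_eq_zero_iff.1 h1
    linarith
  · intro hae
    have hae' : ∀ᵐ t ∂(volume.restrict (Ioc t0 t1)), u t = utilde t := by
      rw [Measure.restrict_congr_set MeasureTheory.Ioc_ae_eq_Icc]; exact hae
    apply MeasureTheory.integral_congr_ae
    filter_upwards [hae'] with t htt
    rw [htt]
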